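/- Let g be a well-typed RDF graph over a type ι of identifiers, let tp be a triple pattern and t₁ a schema triple that is a type of tp, i.e. ⟦tp⟧ ⊆ ⟦t₁⟧*. If t₂ is a schema triple with t₁ ⪯T t₂, then t₂ is also a type of tp: ⟦tp⟧ ⊆ ⟦t₂⟧*. -/
import Mathlib


/-- `c` is a strict subclass of `c'` (rdfs:subClassOf+). -/
def subClassTC {ι : Type*} (g : Set (ι × ι × ι)) (sc : ι) (c c' : ι) : Prop :=
  Relation.TransGen (fun a b => (a, sc, b) ∈ g) c c'

/-- `p` is a strict subproperty of `p'` (rdfs:subPropertyOf+). -/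
def subPropTC {ι : Type*} (g : Set (ι × ι × ι)) (sp : ι) (p p' : ι) : Prop :=
  Relation.TransGen (fun a b => (a, sp, b) ∈ g) p p'

/-- The interpretation of a class `c`. -/
def classInterp {ι : Type*} (g : Set (ι × ι × ι)) (ty sc : ι) (c : ι) : Set ι :=
  {i | (i, ty, c) ∈ g ∨ ∃ c', subClassTC g sc c' c ∧ (i, ty, c') ∈ g}

/-- The is-more-specific relation `⪯` on identifiers. -/
def moreSpecific {ι : Type*} (g : Set (ι × ι × ι)) (ty sc sp : ι) (i₁ i₂ : ι) : Prop :=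
  i₁ = i₂ ∨ subClassTC g sc i₁ i₂ ∨ subPropTC g sp i₁ i₂ ∨ i₁ ∈ classInterp g ty sc i₂

/-- `i` is an individual identifier: it occurs as the subject of a ty-triple. -/
def isIndividual {ι : Type*} (g : Set (ι × ι × ι)) (ty : ι) (i : ι) : Prop :=
  ∃ c, (i, ty, c) ∈ g

/-- `i` is a class identifier: it occurs as the object of a ty-triple or as the
subject or object of an sc-triple. -/
def isClassId {ι : Type*} (g : Set (ι × ι × ι)) (ty sc : ι) (i : ι) : Prop :=
  (∃ j, (j, ty, i) ∈ g) ∨ (∃ c, (i, sc, c) ∈ g) ∨ (∃ c, (c, sc, i) ∈ g)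

/-- `i` is a predicate identifier: it occurs as the subject or object of an sp-triple. -/
def isPredId {ι : Type*} (g : Set (ι × ι × ι)) (sp : ι) (i : ι) : Prop :=
  (∃ q, (i, sp, q) ∈ g) ∨ (∃ q, (q, sp, i) ∈ g)

/-- The graph is well-typed: individuals, classes and predicates are pairwise disjoint. -/
def WellTyped {ι : Type*} (g : Set (ι × ι × ι)) (ty sc sp : ι) : Prop :=
  (∀ i : ι, ¬(isIndividual g ty i ∧ isClassId g ty sc i)) ∧
  (∀ i : ι, ¬(isIndividual g ty i ∧ isPredId g sp i)) ∧
  (∀ i : ι, ¬(isClassId g ty sc i ∧ isPredId g sp i))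

/-- The componentwise is-more-specific relation `⪯T` on triples. -/
def tripleMoreSpecific {ι : Type*} (g : Set (ι × ι × ι)) (ty sc sp : ι)
    (t₁ t₂ : ι × ι × ι) : Prop :=
  moreSpecific g ty sc sp t₁.1 t₂.1 ∧ moreSpecific g ty sc sp t₁.2.1 t₂.2.1 ∧
    moreSpecific g ty sc sp t₁.2.2 t₂.2.2

/-- The natural interpretation of a schema triple. -/
def natTripleInterp {ι : Type*} (g : Set (ι × ι × ι)) (ty sc sp : ι)
    (t : ι × ι × ι) : Set (ι × ι × ι) :=
  {x | x ∈ g ∧ moreSpecific g ty sc sp x.1 t.1 ∧ moreSpecific g ty sc sp x.2.1 t.2.1 ∧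
       moreSpecific g ty sc sp x.2.2 t.2.2}

/-- The interpretation of a triple pattern (components that are `none` are variables). -/
def tpInterp {ι : Type*} (g : Set (ι × ι × ι))
    (tp : Option ι × Option ι × Option ι) : Set (ι × ι × ι) :=
  {x | x ∈ g ∧ (∀ v, tp.1 = some v → x.1 = v) ∧ (∀ v, tp.2.1 = some v → x.2.1 = v) ∧
       (∀ v, tp.2.2 = some v → x.2.2 = v)}


lemma moreSpecific_trans {ι : Type*} (g : Set (ι × ι × ι)) (ty sc sp : ι)
    (hwt : WellTyped g ty sc sp) {a b c : ι}
    (hab : moreSpecific g ty sc sp a b) (hbc : moreSpecific g ty sc sp b c) :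
    moreSpecific g ty sc sp a c := by
  obtain ⟨hIC, hIP, hCP⟩ := hwt
  rcases hab with rfl | hab | hab | hab
  · exact hbc
  all_goals rcases hbc with rfl | hbc | hbc | hbc
  · exact Or.inr (Or.inl hab)
  · exact Or.inr (Or.inl (hab.trans hbc))
  · -- b class (object of sc) and pred (subject of sp)
    obtain ⟨_, _, hedge⟩ := Relation.TransGen.tail'_iff.mp hab
    obtain ⟨_, hedge', _⟩ := Relation.TransGen.head'_iff.mp hbc
    exact absurd ⟨Or.inr (Or.inr ⟨_, hedge⟩), Or.inl ⟨_, hedge'⟩⟩ (hCP b)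
  · -- b class and b individual
    obtain ⟨_, _, hedge⟩ := Relation.TransGen.tail'_iff.mp hab
    have hbind : isIndividual g ty b := by
      rcases hbc with h' | ⟨c', _, h'⟩
      · exact ⟨_, h'⟩
      · exact ⟨_, h'⟩
    exact absurd ⟨hbind, Or.inr (Or.inr ⟨_, hedge⟩)⟩ (hIC b)
  · exact Or.inr (Or.inr (Or.inl hab))
  · obtain ⟨_, _, hedge⟩ := Relation.TransGen.tail'_iff.mp hab
    obtain ⟨_, hedge', _⟩ := Relation.TransGen.head'_iff.mp hbc
    exact absurd ⟨Or.inr (Or.inl ⟨_, hedge'⟩), Or.inr ⟨_, hedge⟩⟩ (hCP b)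
  · exact Or.inr (Or.inr (Or.inl (hab.trans hbc)))
  · obtain ⟨_, _, hedge⟩ := Relation.TransGen.tail'_iff.mp hab
    have hbind : isIndividual g ty b := by
      rcases hbc with h' | ⟨c', _, h'⟩
      · exact ⟨_, h'⟩
      · exact ⟨_, h'⟩
    exact absurd ⟨hbind, Or.inr ⟨_, hedge⟩⟩ (hIP b)
  · exact Or.inr (Or.inr (Or.inr hab))
  · -- a ∈ ⟦b⟧, b ⊑c c : push into ⟦c⟧
    refine Or.inr (Or.inr (Or.inr ?_))
    rcases hab with h' | ⟨c', hc', h'⟩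
    · exact Or.inr ⟨b, hbc, h'⟩
    · exact Or.inr ⟨c', hc'.trans hbc, h'⟩
  · -- b class (from classInterp) and b pred
    have hbcl : isClassId g ty sc b := by
      rcases hab with h' | ⟨c', hc', _⟩
      · exact Or.inl ⟨_, h'⟩
      · obtain ⟨_, _, hedge⟩ := Relation.TransGen.tail'_iff.mp hc'
        exact Or.inr (Or.inr ⟨_, hedge⟩)
    obtain ⟨_, hedge', _⟩ := Relation.TransGen.head'_iff.mp hbc
    exact absurd ⟨hbcl, Or.inl ⟨_, hedge'⟩⟩ (hCP b)
  · -- b class and b individual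
    have hbcl : isClassId g ty sc b := by
      rcases hab with h' | ⟨c', hc', _⟩
      · exact Or.inl ⟨_, h'⟩
      · obtain ⟨_, _, hedge⟩ := Relation.TransGen.tail'_iff.mp hc'
        exact Or.inr (Or.inr ⟨_, hedge⟩)
    have hbind : isIndividual g ty b := by
      rcases hbc with h' | ⟨c', _, h'⟩
      · exact ⟨_, h'⟩
      · exact ⟨_, h'⟩
    exact absurd ⟨hbind, hbcl⟩ (hIC b)

theorem type_of_pattern_up {ι : Type*} (g : Set (ι × ι × ι)) (ty sc sp : ι)
    (hwt : WellTyped g ty sc sp)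
    (tp : Option ι × Option ι × Option ι) (t₁ t₂ : ι × ι × ι)
    (htype : tpInterp g tp ⊆ natTripleInterp g ty sc sp t₁)
    (h : tripleMoreSpecific g ty sc sp t₁ t₂) :
    tpInterp g tp ⊆ natTripleInterp g ty sc sp t₂ := by
  intro x hx
  obtain ⟨hg, h1, h2, h3⟩ := htype hx
  exact ⟨hg, moreSpecific_trans g ty sc sp hwt h1 h.1,
    moreSpecific_trans g ty sc sp hwt h2 h.2.1,
    moreSpecific_trans g ty sc sp hwt h3 h.2.2⟩
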